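/- Let q* > 0 and assume 2·q*·Φ̃(α₀, ξ) < 1. Then there exists a unique continuous function u : [α₀, ξ] → ℝ satisfying the integral equation u(η) = q*·(Φ(ξ, u) − Φ(η, u)) for all η ∈ [α₀, ξ]. -/

import Mathlib

open Real MeasureTheory Set

/-- `E(η,u) = exp(−(2/a)·∫_{α₀}^{η} s·N*(u(s))/L*(u(s)) ds)` -/
noncomputable def Efun (a : ℝ) (L N : ℝ → ℝ) (α₀ : ℝ) (u : ℝ → ℝ) (η : ℝ) : ℝ :=
  Real.exp (-(2 / a) * ∫ s in α₀..η, s * N (u s) / L (u s))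

/-- `Φ(η,u) = α₀^ν·∫_{α₀}^{η} E(v,u)/(v^ν·L*(u(v))) dv` -/
noncomputable def Phi (a ν : ℝ) (L N : ℝ → ℝ) (α₀ : ℝ) (u : ℝ → ℝ) (η : ℝ) : ℝ :=
  α₀ ^ ν * ∫ v in α₀..η, Efun a L N α₀ u v / (v ^ ν * L (u v))

/-- The Lipschitz bound `Φ̃(α₀, η)` from Lemma 4. -/
noncomputable def PhiTilde (a ν Lm NM Ltil Ntil α₀ η : ℝ) : ℝ :=
  (α₀ ^ ν / Lm ^ 2) *
    ((1 / a) * (Ntil + NM * Ltil / Lm) *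
        (η ^ (3 - ν) / (3 - ν) - α₀ ^ 2 * η ^ (1 - ν) / (1 - ν) +
          2 * α₀ ^ (3 - ν) / ((3 - ν) * (1 - ν))) +
      Ltil * (η ^ (1 - ν) - α₀ ^ (1 - ν)) / (1 - ν))

/-! The right-hand side `T u η = q (Φ(ξ,u) − Φ(η,u))` is a contraction of `C([α₀, ξ])` in the
sup norm. As `N*/L*` is Lipschitz and `exp (-·)` is 1-Lipschitz on `[0, ∞)`,
`|E(v,u) − E(v,w)| ≤ K (v² − α₀²) ‖u − w‖ / a`; with `E ≤ 1` this bounds the integrand of `Φ`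
pointwise, and `Φ̃(α₀, ξ)` is exactly `α₀^ν` times the integral of that bound. So `T` is
Lipschitz with constant `2 q Φ̃(α₀, ξ) < 1`, and Banach's fixed point theorem applies. -/

theorem exp_neg_sub_exp_neg_le {x y : ℝ} (hx : 0 ≤ x) (hxy : x ≤ y) :
    exp (-x) - exp (-y) ≤ y - x := by
  have h₁ : exp (-x) ≤ 1 := exp_le_one_iff.2 (by linarith)
  have h₂ : 1 - (y - x) ≤ exp (-(y - x)) := by linarith [add_one_le_exp (-(y - x))]
  have h₃ : exp (-y) = exp (-x) * exp (-(y - x)) := by rw [← exp_add]; ring_nf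
  rw [h₃]
  nlinarith [mul_le_mul_of_nonneg_left h₂ (exp_pos (-x)).le,
    mul_le_mul_of_nonneg_right h₁ (sub_nonneg.2 hxy)]

theorem abs_exp_neg_sub_exp_neg_le {x y : ℝ} (hx : 0 ≤ x) (hy : 0 ≤ y) :
    |exp (-x) - exp (-y)| ≤ |x - y| := by
  wlog hxy : x ≤ y generalizing x y
  · rw [abs_sub_comm, abs_sub_comm x]
    exact this hy hx (le_of_not_ge hxy)
  rw [abs_of_nonneg (sub_nonneg.2 (exp_le_exp.2 (neg_le_neg hxy))), abs_sub_comm,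
    abs_of_nonneg (sub_nonneg.2 hxy)]
  exact exp_neg_sub_exp_neg_le hx hxy

theorem abs_div_sub_div_le {e₁ e₂ l₁ l₂ m : ℝ} (hm : 0 < m) (h₁ : m ≤ l₁) (h₂ : m ≤ l₂)
    (he₂ : 0 ≤ e₂) : |e₁ / l₁ - e₂ / l₂| ≤ |e₁ - e₂| / m + e₂ * |l₁ - l₂| / m ^ 2 := by
  have hl₁ : 0 < l₁ := hm.trans_le h₁
  have hl₂ : 0 < l₂ := hm.trans_le h₂
  have hsplit : e₁ / l₁ - e₂ / l₂ = (e₁ - e₂) / l₁ + e₂ * (l₂ - l₁) / (l₁ * l₂) := by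
    field_simp; ring
  calc |e₁ / l₁ - e₂ / l₂| ≤ |e₁ - e₂| / l₁ + e₂ * |l₁ - l₂| / (l₁ * l₂) := by
        rw [hsplit, abs_sub_comm l₁]
        refine (abs_add_le _ _).trans_eq ?_
        rw [abs_div, abs_div, abs_mul, abs_of_pos hl₁, abs_of_pos (mul_pos hl₁ hl₂),
          abs_of_nonneg he₂]
    _ ≤ |e₁ - e₂| / m + e₂ * |l₁ - l₂| / m ^ 2 := by rw [sq]; gcongr

structure AdmissibleCoeffs (L N : ℝ → ℝ) (Lm NM Ltil Ntil : ℝ) : Prop where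
  Lm_pos : 0 < Lm
  Lm_le : ∀ x, Lm ≤ L x
  N_nonneg : ∀ x, 0 ≤ N x
  N_le : ∀ x, N x ≤ NM
  abs_L_sub_le : ∀ x y, |L x - L y| ≤ Ltil * |x - y|
  abs_N_sub_le : ∀ x y, |N x - N y| ≤ Ntil * |x - y|

namespace AdmissibleCoeffs

variable {L N : ℝ → ℝ} {Lm NM Ltil Ntil : ℝ}

theorem L_pos (h : AdmissibleCoeffs L N Lm NM Ltil Ntil) (x : ℝ) : 0 < L x :=
  h.Lm_pos.trans_le (h.Lm_le x)

theorem NM_nonneg (h : AdmissibleCoeffs L N Lm NM Ltil Ntil) : 0 ≤ NM :=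
  (h.N_nonneg 0).trans (h.N_le 0)

theorem Ltil_nonneg (h : AdmissibleCoeffs L N Lm NM Ltil Ntil) : 0 ≤ Ltil := by
  simpa using (abs_nonneg _).trans (h.abs_L_sub_le 0 1)

theorem Ntil_nonneg (h : AdmissibleCoeffs L N Lm NM Ltil Ntil) : 0 ≤ Ntil := by
  simpa using (abs_nonneg _).trans (h.abs_N_sub_le 0 1)

theorem continuous_L (h : AdmissibleCoeffs L N Lm NM Ltil Ntil) : Continuous L :=
  (LipschitzWith.of_dist_le' h.abs_L_sub_le).continuous

theorem continuous_N (h : AdmissibleCoeffs L N Lm NM Ltil Ntil) : Continuous N :=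
  (LipschitzWith.of_dist_le' h.abs_N_sub_le).continuous

theorem abs_div_sub_div_le (h : AdmissibleCoeffs L N Lm NM Ltil Ntil) (x y : ℝ) :
    |N x / L x - N y / L y| ≤ (Ntil + NM * Ltil / Lm) / Lm * |x - y| :=
  calc |N x / L x - N y / L y|
      ≤ |N x - N y| / Lm + N y * |L x - L y| / Lm ^ 2 :=
        _root_.abs_div_sub_div_le h.Lm_pos (h.Lm_le x) (h.Lm_le y) (h.N_nonneg y)
    _ ≤ Ntil * |x - y| / Lm + NM * (Ltil * |x - y|) / Lm ^ 2 := by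
        have := h.Lm_pos
        gcongr
        exacts [h.abs_N_sub_le x y, h.NM_nonneg, h.N_le y, h.abs_L_sub_le x y]
    _ = (Ntil + NM * Ltil / Lm) / Lm * |x - y| := by
        have := h.Lm_pos.ne'
        field_simp

end AdmissibleCoeffs

section Estimates

variable {a ν α₀ ξ Lm NM Ltil Ntil d : ℝ} {L N u w : ℝ → ℝ}

theorem continuousOn_Efun_integrand (h : AdmissibleCoeffs L N Lm NM Ltil Ntil)
    (hu : ContinuousOn u (Icc α₀ ξ)) :
    ContinuousOn (fun s => s * N (u s) / L (u s)) (Icc α₀ ξ) :=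
  (continuousOn_id.mul (h.continuous_N.comp_continuousOn hu)).div
    (h.continuous_L.comp_continuousOn hu) fun s _ => (h.L_pos (u s)).ne'

theorem integral_Efun_integrand_nonneg (hα₀ : 0 ≤ α₀) (h : AdmissibleCoeffs L N Lm NM Ltil Ntil)
    {η : ℝ} (hη : α₀ ≤ η) : 0 ≤ ∫ s in α₀..η, s * N (u s) / L (u s) :=
  intervalIntegral.integral_nonneg hη fun s hs => by
    have := h.N_nonneg (u s)
    have := h.L_pos (u s)
    have : 0 ≤ s := hα₀.trans hs.1
    positivity

theorem Efun_le_one (ha : 0 < a) (hα₀ : 0 ≤ α₀) (h : AdmissibleCoeffs L N Lm NM Ltil Ntil)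
    {η : ℝ} (hη : α₀ ≤ η) : Efun a L N α₀ u η ≤ 1 := by
  rw [Efun, exp_le_one_iff, neg_mul, neg_nonpos]
  exact mul_nonneg (by positivity) (integral_Efun_integrand_nonneg hα₀ h hη)

theorem continuousOn_Efun (hαξ : α₀ ≤ ξ) (h : AdmissibleCoeffs L N Lm NM Ltil Ntil)
    (hu : ContinuousOn u (Icc α₀ ξ)) : ContinuousOn (Efun a L N α₀ u) (Icc α₀ ξ) := by
  have hF := continuousOn_Efun_integrand h hu
  rw [← uIcc_of_le hαξ] at hF ⊢
  exact continuous_exp.comp_continuousOn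
    (continuousOn_const.mul
      (intervalIntegral.continuousOn_primitive_interval (hF.integrableOn_uIcc (μ := volume))))

theorem continuousOn_Phi_integrand (hα₀ : 0 < α₀) (hαξ : α₀ ≤ ξ)
    (h : AdmissibleCoeffs L N Lm NM Ltil Ntil) (hu : ContinuousOn u (Icc α₀ ξ)) :
    ContinuousOn (fun v => Efun a L N α₀ u v / (v ^ ν * L (u v))) (Icc α₀ ξ) := by
  refine (continuousOn_Efun hαξ h hu).div
    (ContinuousOn.mul (fun v hv => ?_) (h.continuous_L.comp_continuousOn hu)) fun v hv => ?_
  · exact (continuousAt_rpow_const v ν (Or.inl (hα₀.trans_le hv.1).ne')).continuousWithinAt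
  · exact (mul_pos (rpow_pos_of_pos (hα₀.trans_le hv.1) ν) (h.L_pos (u v))).ne'

theorem continuousOn_Phi (hα₀ : 0 < α₀) (hαξ : α₀ ≤ ξ) (h : AdmissibleCoeffs L N Lm NM Ltil Ntil)
    (hu : ContinuousOn u (Icc α₀ ξ)) : ContinuousOn (Phi a ν L N α₀ u) (Icc α₀ ξ) := by
  have hg := continuousOn_Phi_integrand (a := a) (ν := ν) hα₀ hαξ h hu
  rw [← uIcc_of_le hαξ] at hg ⊢
  exact continuousOn_const.mul
    (intervalIntegral.continuousOn_primitive_interval (hg.integrableOn_uIcc (μ := volume)))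

theorem abs_Efun_sub_Efun_le (ha : 0 < a) (hα₀ : 0 ≤ α₀)
    (h : AdmissibleCoeffs L N Lm NM Ltil Ntil) (hu : ContinuousOn u (Icc α₀ ξ))
    (hw : ContinuousOn w (Icc α₀ ξ)) (hd : ∀ s ∈ Icc α₀ ξ, |u s - w s| ≤ d)
    {v : ℝ} (hv : v ∈ Icc α₀ ξ) :
    |Efun a L N α₀ u v - Efun a L N α₀ w v|
      ≤ (Ntil + NM * Ltil / Lm) / Lm * d * (v ^ 2 - α₀ ^ 2) / a := by
  set K := (Ntil + NM * Ltil / Lm) / Lm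
  have hK : 0 ≤ K := by
    have := h.Lm_pos; have := h.Ntil_nonneg; have := h.NM_nonneg; have := h.Ltil_nonneg
    positivity
  have hsub : Icc α₀ v ⊆ Icc α₀ ξ := Icc_subset_Icc_right hv.2
  have hFu :=
    ((continuousOn_Efun_integrand h hu).mono hsub).intervalIntegrable_of_Icc (μ := volume) hv.1
  have hFw :=
    ((continuousOn_Efun_integrand h hw).mono hsub).intervalIntegrable_of_Icc (μ := volume) hv.1
  have hpt : ∀ s ∈ Icc α₀ v,
      |s * N (u s) / L (u s) - s * N (w s) / L (w s)| ≤ K * d * s := fun s hs => by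
    have hs0 : 0 ≤ s := hα₀.trans hs.1
    rw [mul_div_assoc, mul_div_assoc, ← mul_sub, abs_mul, abs_of_nonneg hs0, mul_comm]
    gcongr
    exact (h.abs_div_sub_div_le _ _).trans (mul_le_mul_of_nonneg_left (hd s (hsub hs)) hK)
  have hint : |∫ s in α₀..v, (s * N (u s) / L (u s) - s * N (w s) / L (w s))|
      ≤ ∫ s in α₀..v, K * d * s :=
    (intervalIntegral.abs_integral_le_integral_abs hv.1).trans
      (intervalIntegral.integral_mono_on hv.1 (hFu.sub hFw).abs
        ((continuous_const_mul (K * d)).intervalIntegrable _ _) hpt)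
  have h2a : 0 < 2 / a := by positivity
  calc |Efun a L N α₀ u v - Efun a L N α₀ w v|
      ≤ |2 / a * (∫ s in α₀..v, s * N (u s) / L (u s))
          - 2 / a * ∫ s in α₀..v, s * N (w s) / L (w s)| := by
        rw [Efun, Efun, neg_mul, neg_mul]
        exact abs_exp_neg_sub_exp_neg_le
          (mul_nonneg h2a.le (integral_Efun_integrand_nonneg hα₀ h hv.1))
          (mul_nonneg h2a.le (integral_Efun_integrand_nonneg hα₀ h hv.1))
    _ = 2 / a * |∫ s in α₀..v, (s * N (u s) / L (u s) - s * N (w s) / L (w s))| := by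
        rw [← mul_sub, abs_mul, abs_of_pos h2a, intervalIntegral.integral_sub hFu hFw]
    _ ≤ 2 / a * ∫ s in α₀..v, K * d * s := by gcongr
    _ = K * d * (v ^ 2 - α₀ ^ 2) / a := by
        rw [intervalIntegral.integral_const_mul, integral_id]
        ring

theorem abs_Phi_integrand_sub_le (ha : 0 < a) (hα₀ : 0 < α₀)
    (h : AdmissibleCoeffs L N Lm NM Ltil Ntil) (hu : ContinuousOn u (Icc α₀ ξ))
    (hw : ContinuousOn w (Icc α₀ ξ)) (hd : ∀ s ∈ Icc α₀ ξ, |u s - w s| ≤ d)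
    {v : ℝ} (hv : v ∈ Icc α₀ ξ) :
    |Efun a L N α₀ u v / (v ^ ν * L (u v)) - Efun a L N α₀ w v / (v ^ ν * L (w v))|
      ≤ ((1 / a) * (Ntil + NM * Ltil / Lm) * (v ^ 2 - α₀ ^ 2) + Ltil) / v ^ ν * (d / Lm ^ 2) := by
  have hvν : 0 < v ^ ν := rpow_pos_of_pos (hα₀.trans_le hv.1) ν
  have hLm := h.Lm_pos
  have hE := abs_Efun_sub_Efun_le ha hα₀.le h hu hw hd hv
  have hL : |L (u v) - L (w v)| ≤ Ltil * d :=
    (h.abs_L_sub_le _ _).trans (mul_le_mul_of_nonneg_left (hd v hv) h.Ltil_nonneg)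
  have hE0 : 0 ≤ Efun a L N α₀ w v := (exp_pos _).le
  have hEL : Efun a L N α₀ w v * |L (u v) - L (w v)| ≤ 1 * (Ltil * d) :=
    mul_le_mul (Efun_le_one ha hα₀.le h hv.1) hL (abs_nonneg _) zero_le_one
  rw [div_mul_eq_div_div_swap, div_mul_eq_div_div_swap, ← sub_div, abs_div, abs_of_pos hvν,
    div_mul_eq_mul_div]
  gcongr
  calc _ ≤ _ := abs_div_sub_div_le hLm (h.Lm_le _) (h.Lm_le _) hE0
    _ ≤ (Ntil + NM * Ltil / Lm) / Lm * d * (v ^ 2 - α₀ ^ 2) / a / Lm + 1 * (Ltil * d) / Lm ^ 2 := by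
        gcongr
    _ = _ := by field_simp

theorem integral_sq_sub_sq_add_div_rpow (A B : ℝ) (hα₀ : 0 < α₀) (hξ : 0 < ξ)
    (hν1 : ν ≠ 1) (hν3 : ν ≠ 3) :
    ∫ v in α₀..ξ, (A * (v ^ 2 - α₀ ^ 2) + B) / v ^ ν
      = A * (ξ ^ (3 - ν) / (3 - ν) - α₀ ^ 2 * ξ ^ (1 - ν) / (1 - ν)
          + 2 * α₀ ^ (3 - ν) / ((3 - ν) * (1 - ν)))
        + B * (ξ ^ (1 - ν) - α₀ ^ (1 - ν)) / (1 - ν) := by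
  have h0 : (0 : ℝ) ∉ uIcc α₀ ξ := notMem_uIcc_of_lt hα₀ hξ
  have hpos : ∀ v ∈ uIcc α₀ ξ, 0 < v := fun v hv => by
    rcases le_total α₀ ξ with h | h
    · rw [uIcc_of_le h] at hv; exact hα₀.trans_le hv.1
    · rw [uIcc_of_ge h] at hv; exact hξ.trans_le hv.1
  have hsplit : EqOn (fun v => (A * (v ^ 2 - α₀ ^ 2) + B) / v ^ ν)
      (fun v => A * v ^ (2 - ν) + (B - A * α₀ ^ 2) * v ^ (-ν)) (uIcc α₀ ξ) := fun v hv => by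
    have hv := hpos v hv
    simp only [rpow_sub hv, rpow_neg hv.le, rpow_two]
    field_simp
    ring
  have hint : ∀ r : ℝ, IntervalIntegrable (fun v : ℝ => v ^ r) volume α₀ ξ := fun r =>
    intervalIntegral.intervalIntegrable_rpow (Or.inr h0)
  have h3 : (3 : ℝ) - ν ≠ 0 := sub_ne_zero.2 hν3.symm
  have h1 : (1 : ℝ) - ν ≠ 0 := sub_ne_zero.2 hν1.symm
  have hα : α₀ ^ (3 - ν) = α₀ ^ 2 * α₀ ^ (1 - ν) := by
    rw [show (3 : ℝ) - ν = 2 + (1 - ν) by ring, rpow_add hα₀, rpow_two]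
  rw [intervalIntegral.integral_congr hsplit, intervalIntegral.integral_add
      ((hint _).const_mul _) ((hint _).const_mul _), intervalIntegral.integral_const_mul,
    intervalIntegral.integral_const_mul,
    integral_rpow (Or.inr ⟨by contrapose! hν3; linarith, h0⟩),
    integral_rpow (Or.inr ⟨by contrapose! hν1; linarith, h0⟩),
    show 2 - ν + 1 = 3 - ν by ring, show -ν + 1 = 1 - ν by ring, hα]
  field_simp
  ring

theorem PhiTilde_eq_integral (hα₀ : 0 < α₀) (hξ : 0 < ξ)
    (hν1 : ν ≠ 1) (hν3 : ν ≠ 3) :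
    PhiTilde a ν Lm NM Ltil Ntil α₀ ξ = α₀ ^ ν / Lm ^ 2 *
      ∫ v in α₀..ξ, ((1 / a) * (Ntil + NM * Ltil / Lm) * (v ^ 2 - α₀ ^ 2) + Ltil) / v ^ ν := by
  rw [integral_sq_sub_sq_add_div_rpow _ _ hα₀ hξ hν1 hν3, PhiTilde]

theorem abs_Phi_sub_Phi_le {η : ℝ} (ha : 0 < a) (hν1 : ν ≠ 1) (hν3 : ν ≠ 3) (hα₀ : 0 < α₀)
    (h : AdmissibleCoeffs L N Lm NM Ltil Ntil) (hu : ContinuousOn u (Icc α₀ ξ))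
    (hw : ContinuousOn w (Icc α₀ ξ)) (hd : ∀ s ∈ Icc α₀ ξ, |u s - w s| ≤ d)
    (hη : η ∈ Icc α₀ ξ) :
    |Phi a ν L N α₀ u η - Phi a ν L N α₀ w η| ≤ PhiTilde a ν Lm NM Ltil Ntil α₀ ξ * d := by
  have hαξ : α₀ ≤ ξ := hη.1.trans hη.2
  set g := fun u v => Efun a L N α₀ u v / (v ^ ν * L (u v))
  set B := fun v => ((1 / a) * (Ntil + NM * Ltil / Lm) * (v ^ 2 - α₀ ^ 2) + Ltil) / v ^ ν
  have hg : ∀ u, ContinuousOn u (Icc α₀ ξ) → IntervalIntegrable (g u) volume α₀ η := fun u hu =>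
    ((continuousOn_Phi_integrand hα₀ hαξ h hu).mono
      (Icc_subset_Icc_right hη.2)).intervalIntegrable_of_Icc hη.1
  have hB : ContinuousOn B (Icc α₀ ξ) := by
    refine ContinuousOn.div (by fun_prop) (fun v hv => ?_) fun v hv => ?_
    · exact (continuousAt_rpow_const v ν (Or.inl (hα₀.trans_le hv.1).ne')).continuousWithinAt
    · exact (rpow_pos_of_pos (hα₀.trans_le hv.1) ν).ne'
  have hBd : ∀ v ∈ Icc α₀ ξ, |g u v - g w v| ≤ B v * (d / Lm ^ 2) := fun v hv =>
    abs_Phi_integrand_sub_le ha hα₀ h hu hw hd hv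
  have hBd_int := (hB.mul continuousOn_const (g := fun _ => d / Lm ^ 2)).intervalIntegrable_of_Icc
    (μ := volume) hαξ
  calc |Phi a ν L N α₀ u η - Phi a ν L N α₀ w η|
      = α₀ ^ ν * |∫ v in α₀..η, (g u v - g w v)| := by
        rw [Phi, Phi, ← mul_sub, abs_mul, abs_of_pos (rpow_pos_of_pos hα₀ ν),
          intervalIntegral.integral_sub (hg u hu) (hg w hw)]
    _ ≤ α₀ ^ ν * ∫ v in α₀..η, B v * (d / Lm ^ 2) := by
        gcongr
        refine (intervalIntegral.abs_integral_le_integral_abs hη.1).trans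
          (intervalIntegral.integral_mono_on hη.1 ((hg u hu).sub (hg w hw)).abs
            (hBd_int.mono_set ?_) fun v hv => hBd v ⟨hv.1, hv.2.trans hη.2⟩)
        rw [uIcc_of_le hη.1, uIcc_of_le hαξ]
        exact Icc_subset_Icc_right hη.2
    _ ≤ α₀ ^ ν * ∫ v in α₀..ξ, B v * (d / Lm ^ 2) := by
        gcongr
        refine intervalIntegral.integral_mono_interval le_rfl hη.1 hη.2
          ((ae_restrict_iff' measurableSet_Ioc).2 (Filter.Eventually.of_forall fun v hv => ?_))
          hBd_int
        exact (abs_nonneg _).trans (hBd v ⟨hv.1.le, hv.2⟩)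
    _ = PhiTilde a ν Lm NM Ltil Ntil α₀ ξ * d := by
        rw [PhiTilde_eq_integral hα₀ (hα₀.trans_le hαξ) hν1 hν3,
          intervalIntegral.integral_mul_const]
        ring

end Estimates

theorem exists_unique_continuousOn_fixedPoint_of_contraction {a b K : ℝ} (hab : a ≤ b)
    (hK : K < 1) (T : (ℝ → ℝ) → ℝ → ℝ)
    (hT_cont : ∀ u, ContinuousOn u (Icc a b) → ContinuousOn (T u) (Icc a b))
    (hT_lip : ∀ u w d, ContinuousOn u (Icc a b) → ContinuousOn w (Icc a b) →
      (∀ s ∈ Icc a b, |u s - w s| ≤ d) → ∀ η ∈ Icc a b, |T u η - T w η| ≤ K * d) :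
    ∃ u : ℝ → ℝ, (ContinuousOn u (Icc a b) ∧ ∀ η ∈ Icc a b, u η = T u η) ∧
      ∀ v : ℝ → ℝ, ContinuousOn v (Icc a b) → (∀ η ∈ Icc a b, v η = T v η) →
        EqOn v u (Icc a b) := by
  have : Nonempty (Icc a b) := (nonempty_Icc.2 hab).to_subtype
  have hext : ∀ f : C(Icc a b, ℝ), ContinuousOn (IccExtend hab f) (Icc a b) := fun f =>
    f.continuous.Icc_extend'.continuousOn
  -- `T` only sees its argument on `[a, b]`: take `d = 0`.
  have hT_congr : ∀ u w, ContinuousOn u (Icc a b) → ContinuousOn w (Icc a b) →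
      EqOn u w (Icc a b) → EqOn (T u) (T w) (Icc a b) := fun u w hu hw huw η hη => by
    have := hT_lip u w 0 hu hw (fun s hs => by simp [huw hs]) η hη
    rwa [mul_zero, abs_nonpos_iff, sub_eq_zero] at this
  let S : C(Icc a b, ℝ) → C(Icc a b, ℝ) := fun f =>
    ⟨(Icc a b).domRestrict (T (IccExtend hab f)), (hT_cont _ (hext f)).domRestrict⟩
  have hS : ContractingWith K.toNNReal S := by
    refine ⟨toNNReal_lt_one.2 hK, LipschitzWith.of_dist_le' fun f g => ?_⟩
    refine (ContinuousMap.dist_le_iff_of_nonempty).2 fun x => hT_lip _ _ _ (hext f) (hext g)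
      (fun s hs => ?_) x x.2
    rw [IccExtend_of_mem hab f hs, IccExtend_of_mem hab g hs, ← Real.dist_eq]
    exact ContinuousMap.dist_apply_le_dist _
  obtain ⟨f, hf⟩ : ∃ f, S f = f := ⟨_, hS.fixedPoint_isFixedPt⟩
  refine ⟨IccExtend hab f, ⟨hext f, fun η hη => ?_⟩, fun v hv hvT => ?_⟩
  · rw [IccExtend_of_mem hab f hη]
    exact (congrArg (· ⟨η, hη⟩) hf).symm
  · set g : C(Icc a b, ℝ) := ⟨(Icc a b).domRestrict v, hv.domRestrict⟩
    have hg : S g = g := by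
      ext x
      exact (hT_congr _ _ (hext g) hv (fun s hs => IccExtend_of_mem hab g hs) x.2).trans
        (hvT x x.2).symm
    intro η hη
    rw [IccExtend_of_mem hab f hη, ← hS.fixedPoint_unique' hg hf]
    rfl

theorem stmt_6_general (a ν α₀ ξ : ℝ) (L N : ℝ → ℝ) (Lm LM Nm NM Ltil Ntil q : ℝ)
    (ha : 0 < a) (hν1 : ν < 1) (hα₀ : 0 < α₀) (hαξ : α₀ < ξ)
    (hq : 0 < q)
    (hLm : 0 < Lm) (hNm : 0 < Nm)
    (hL : ∀ x : ℝ, Lm ≤ L x ∧ L x ≤ LM)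
    (hN : ∀ x : ℝ, Nm ≤ N x ∧ N x ≤ NM)
    (hLlip : ∀ x y : ℝ, |L x - L y| ≤ Ltil * |x - y|)
    (hNlip : ∀ x y : ℝ, |N x - N y| ≤ Ntil * |x - y|)
    (hcontr : 2 * q * PhiTilde a ν Lm NM Ltil Ntil α₀ ξ < 1) :
    ∃ u : ℝ → ℝ,
      (ContinuousOn u (Icc α₀ ξ) ∧
        ∀ η ∈ Icc α₀ ξ, u η = q * (Phi a ν L N α₀ u ξ - Phi a ν L N α₀ u η)) ∧
      ∀ v : ℝ → ℝ, ContinuousOn v (Icc α₀ ξ) →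
        (∀ η ∈ Icc α₀ ξ, v η = q * (Phi a ν L N α₀ v ξ - Phi a ν L N α₀ v η)) →
        EqOn v u (Icc α₀ ξ) := by
  have h : AdmissibleCoeffs L N Lm NM Ltil Ntil :=
    ⟨hLm, fun x => (hL x).1, fun x => hNm.le.trans (hN x).1, fun x => (hN x).2, hLlip, hNlip⟩
  have hν3 : ν ≠ 3 := (hν1.trans (by norm_num)).ne
  refine exists_unique_continuousOn_fixedPoint_of_contraction hαξ.le hcontr
    (fun u η => q * (Phi a ν L N α₀ u ξ - Phi a ν L N α₀ u η))
    (fun u hu => continuousOn_const.mul (continuousOn_const.sub (continuousOn_Phi hα₀ hαξ.le h hu)))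
    fun u w d hu hw hd η hη => ?_
  have hΦ := fun η hη => abs_Phi_sub_Phi_le ha hν1.ne hν3 hα₀ h hu hw hd (η := η) hη
  set Φ := Phi a ν L N α₀
  set C := PhiTilde a ν Lm NM Ltil Ntil α₀ ξ
  calc |q * (Φ u ξ - Φ u η) - q * (Φ w ξ - Φ w η)|
      = q * |(Φ u ξ - Φ w ξ) - (Φ u η - Φ w η)| := by
        rw [← abs_of_pos hq, ← abs_mul, abs_of_pos hq]
        ring_nf
    _ ≤ q * (C * d + C * d) := by
        gcongr
        exact (abs_sub _ _).trans (add_le_add (hΦ ξ (right_mem_Icc.2 hαξ.le)) (hΦ η hη))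
    _ = 2 * q * C * d := by ring

theorem stmt_6 (a ν α₀ ξ : ℝ) (L N : ℝ → ℝ) (Lm LM Nm NM Ltil Ntil q : ℝ)
    (ha : 0 < a) (hν0 : 0 < ν) (hν1 : ν < 1) (hα₀ : 0 < α₀) (hαξ : α₀ < ξ)
    (hq : 0 < q)
    (hLcont : Continuous L) (hNcont : Continuous N)
    (hLm : 0 < Lm) (hNm : 0 < Nm) (hLtil : 0 < Ltil) (hNtil : 0 < Ntil)
    (hL : ∀ x : ℝ, Lm ≤ L x ∧ L x ≤ LM)
    (hN : ∀ x : ℝ, Nm ≤ N x ∧ N x ≤ NM)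
    (hLlip : ∀ x y : ℝ, |L x - L y| ≤ Ltil * |x - y|)
    (hNlip : ∀ x y : ℝ, |N x - N y| ≤ Ntil * |x - y|)
    (hcontr : 2 * q * PhiTilde a ν Lm NM Ltil Ntil α₀ ξ < 1) :
    ∃ u : ℝ → ℝ,
      (ContinuousOn u (Icc α₀ ξ) ∧
        ∀ η ∈ Icc α₀ ξ, u η = q * (Phi a ν L N α₀ u ξ - Phi a ν L N α₀ u η)) ∧
      ∀ v : ℝ → ℝ, ContinuousOn v (Icc α₀ ξ) →
        (∀ η ∈ Icc α₀ ξ, v η = q * (Phi a ν L N α₀ v ξ - Phi a ν L N α₀ v η)) →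
        EqOn v u (Icc α₀ ξ) :=
  stmt_6_general a ν α₀ ξ L N Lm LM Nm NM Ltil Ntil q ha hν1 hα₀ hαξ hq hLm hNm hL hN hLlip hNlip
    hcontr
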